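/- (The most reliable path can be solved via the generalized Bellman–Ford algorithm.) For all vertices u, v : V, the (max, ×) Bellman–Ford iterates are entrywise monotone nondecreasing in t and converge to the most-reliable-path value, i.e., ⨆_{t : ℕ} (R_t u v) = ⨆_{k : ℕ} ⨆ over all walks p of length k from u to v of ∏_{i=0}^{k-1} w (p i) (p (i+1)) (the supremum over all walks of any length of the product of edge probabilities along the walk, with the empty product for k = 0 equal to 1). -/

import Mathlib

open ENNReal

/-- The (max, ×) generalized Bellman–Ford iterates for most reliable path:
`R 0 u v = if u = v then 1 else 0` and
`R (t+1) u v = max (⨆ x, R t u x * w x v) (R 0 u v)`. -/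
noncomputable def maxProdBF {V : Type*} [Fintype V] [DecidableEq V]
    (w : Matrix V V ℝ≥0∞) : ℕ → V → V → ℝ≥0∞
  | 0 => fun u v => if u = v then 1 else 0
  | t + 1 => fun u v =>
      max (⨆ x : V, maxProdBF w t u x * w x v) (if u = v then 1 else 0)

/- Splitting off the last edge shows by induction on `t` that `R t u v` dominates the weight of
every walk of length `t` from `u` to `v`. Conversely, appending an edge to a walk multiplies its
weight by that edge, so the supremum over all walks is a fixed point of the relaxation step and
dominates every iterate. Monotonicity holds because each iterate keeps the diagonal term `R 0` and
the relaxation step is monotone. -/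

section Walks

variable {V M : Type*} [CommMonoid M]

def walkWeight (w : V → V → M) {k : ℕ} (p : Fin (k + 1) → V) : M :=
  ∏ i : Fin k, w (p i.castSucc) (p i.succ)

theorem walkWeight_eq_init_mul (w : V → V → M) {k : ℕ} (p : Fin (k + 2) → V) :
    walkWeight w p = walkWeight w (Fin.init p) * w (p (Fin.last k).castSucc) (p (Fin.last _)) := by
  simp only [walkWeight, Fin.prod_univ_castSucc, Fin.init, Fin.succ_castSucc, Fin.succ_last]

theorem walkWeight_snoc (w : V → V → M) {k : ℕ} (p : Fin (k + 1) → V) (x : V) :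
    walkWeight w (Fin.snoc p x : Fin (k + 2) → V) = walkWeight w p * w (p (Fin.last k)) x := by
  rw [walkWeight_eq_init_mul, Fin.init_snoc, Fin.snoc_castSucc, Fin.snoc_last]

end Walks

section MostReliablePath

variable {V : Type*} (w : V → V → ℝ≥0∞)

noncomputable def mostReliablePathValue (u v : V) : ℝ≥0∞ :=
  ⨆ k : ℕ, ⨆ p : {p : Fin (k + 1) → V // p 0 = u ∧ p (Fin.last k) = v}, walkWeight w p.1

theorem ite_le_mostReliablePathValue [DecidableEq V] (u v : V) :
    (if u = v then 1 else 0) ≤ mostReliablePathValue w u v := by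
  split_ifs with h
  · subst h
    exact le_iSup_of_le 0 (le_iSup_of_le ⟨fun _ => u, rfl, rfl⟩ (by simp [walkWeight]))
  · exact zero_le

theorem mostReliablePathValue_mul_le (u x v : V) :
    mostReliablePathValue w u x * w x v ≤ mostReliablePathValue w u v := by
  simp only [mostReliablePathValue, ENNReal.iSup_mul]
  refine iSup_le fun k => iSup_le fun ⟨p, hp0, hpk⟩ => ?_
  subst hpk
  have hq0 : (Fin.snoc p v : Fin (k + 2) → V) 0 = u := by
    rw [← Fin.castSucc_zero, Fin.snoc_castSucc, hp0]
  refine le_iSup_of_le (k + 1) (le_iSup_of_le ⟨Fin.snoc p v, hq0, Fin.snoc_last _ _⟩ ?_)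
  rw [walkWeight_snoc]

end MostReliablePath

section BellmanFord

variable {V : Type*} [Fintype V] [DecidableEq V] (w : V → V → ℝ≥0∞)

theorem maxProdBF_le_succ (t : ℕ) (u v : V) : maxProdBF w t u v ≤ maxProdBF w (t + 1) u v := by
  induction t generalizing v with
  | zero => exact le_max_right _ _
  | succ t ih => exact max_le_max (iSup_mono fun x => mul_le_mul_left (ih x) _) le_rfl

theorem walkWeight_le_maxProdBF {k : ℕ} (p : Fin (k + 1) → V) :
    walkWeight w p ≤ maxProdBF w k (p 0) (p (Fin.last k)) := by
  induction k with
  | zero => simp [walkWeight, maxProdBF, Fin.last]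
  | succ k ih =>
    calc walkWeight w p
        = walkWeight w (Fin.init p) * w (p (Fin.last k).castSucc) (p (Fin.last _)) :=
          walkWeight_eq_init_mul w p
      _ ≤ maxProdBF w k (p 0) (p (Fin.last k).castSucc) *
            w (p (Fin.last k).castSucc) (p (Fin.last _)) := mul_le_mul_left (ih (Fin.init p)) _
      _ ≤ ⨆ x, maxProdBF w k (p 0) x * w x (p (Fin.last _)) := le_iSup_of_le _ le_rfl
      _ ≤ maxProdBF w (k + 1) (p 0) (p (Fin.last _)) := le_max_left _ _

theorem maxProdBF_le_mostReliablePathValue (t : ℕ) (u v : V) :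
    maxProdBF w t u v ≤ mostReliablePathValue w u v := by
  induction t generalizing v with
  | zero => exact ite_le_mostReliablePathValue w u v
  | succ t ih =>
    refine max_le (iSup_le fun x => ?_) (ite_le_mostReliablePathValue w u v)
    exact (mul_le_mul_left (ih x) _).trans (mostReliablePathValue_mul_le w u x v)

end BellmanFord

theorem maxProdBF_monotone_and_iSup_eq_most_reliable_path_general {V : Type*} [Fintype V] [DecidableEq V]
    (w : Matrix V V ℝ≥0∞) (u v : V) :
    Monotone (fun t : ℕ => maxProdBF w t u v) ∧
      (⨆ t : ℕ, maxProdBF w t u v) =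
        ⨆ k : ℕ, ⨆ p : {p : Fin (k + 1) → V // p 0 = u ∧ p (Fin.last k) = v},
          ∏ i : Fin k, w (p.1 i.castSucc) (p.1 i.succ) := by
  refine ⟨monotone_nat_of_le_succ fun t => maxProdBF_le_succ w t u v, le_antisymm ?_ ?_⟩
  · exact iSup_le fun t => maxProdBF_le_mostReliablePathValue w t u v
  · refine iSup_le fun k => iSup_le fun ⟨p, hp0, hpk⟩ => ?_
    have hp := walkWeight_le_maxProdBF w p
    rw [hp0, hpk] at hp
    exact hp.trans (le_iSup (fun t => maxProdBF w t u v) k)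

theorem maxProdBF_monotone_and_iSup_eq_most_reliable_path {V : Type*} [Fintype V] [DecidableEq V]
    (w : Matrix V V ℝ≥0∞) (hw : ∀ x y : V, w x y ≤ 1) (u v : V) :
    Monotone (fun t : ℕ => maxProdBF w t u v) ∧
      (⨆ t : ℕ, maxProdBF w t u v) =
        ⨆ k : ℕ, ⨆ p : {p : Fin (k + 1) → V // p 0 = u ∧ p (Fin.last k) = v},
          ∏ i : Fin k, w (p.1 i.castSucc) (p.1 i.succ) :=
  maxProdBF_monotone_and_iSup_eq_most_reliable_path_general w u v
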